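/- arXiv:2305.04817 — 3 statements merged into one kernel-verified Lean document; each statement's English description precedes it below -/
import Mathlib

section
/- Let θ be the random substitution with θ(a) = {aa, ab} and θ(b) = {ba}. Then for all m ≥ 1, (1/2^m) log(#θ^m(b)) = Σ_{n=1}^{m} 2^{-n} log n. -/
open Filter Topology

namespace RandSub

variable {A : Type*} [DecidableEq A]

/-- Extension of a substitution to words: set of all concatenations of realisations. -/
def wordSubst (θ : A → Finset (List A)) : List A → Finset (List A)
  | [] => {([] : List A)}
  | a :: u => (θ a).biUnion fun v => (wordSubst θ u).image fun w => v ++ w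

/-- Powers of a random substitution: `substPow θ m a` is the set of realisations of `θ^m(a)`. -/
def substPow (θ : A → Finset (List A)) : ℕ → A → Finset (List A)
  | 0, a => {[a]}
  | m + 1, a => (substPow θ m a).biUnion fun v => wordSubst θ v

/-- `θ^m` applied to a word. -/
def wordSubstPow (θ : A → Finset (List A)) (m : ℕ) (u : List A) : Finset (List A) :=
  wordSubst (fun a => substPow θ m a) u

/-- A word is θ-legal if it occurs as a subword of some realisation of some `θ^k(a)`. -/
def IsLegal (θ : A → Finset (List A)) (u : List A) : Prop :=
  ∃ (a : A) (k : ℕ) (w : List A), w ∈ substPow θ k a ∧ u <:+: w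

/-- The finite subword of a bi-infinite sequence `x` of length `n` starting at position `i`. -/
def wordAt {B : Type*} (x : ℤ → B) (i : ℤ) (n : ℕ) : List B :=
  (List.range n).map fun j => x (i + j)

/-- The subshift associated with a random substitution. -/
def substShift (θ : A → Finset (List A)) : Set (ℤ → A) :=
  {x | ∀ (i : ℤ) (n : ℕ), IsLegal θ (wordAt x i n)}

/-- The language of a subshift. -/
def lang {B : Type*} (X : Set (ℤ → B)) : Set (List B) :=
  {u | ∃ x ∈ X, ∃ i : ℤ, u = wordAt x i u.length}

/-- The complexity function of a subshift. -/
noncomputable def complexity {B : Type*} (X : Set (ℤ → B)) (n : ℕ) : ℕ :=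
  Nat.card {u : List B | u.length = n ∧ u ∈ lang X}

/-- Topological entropy of a subshift (defined via `limsup`; when the limit of
`log p_X(n) / n` exists it coincides with it). -/
noncomputable def topEntropy {B : Type*} (X : Set (ℤ → B)) : ℝ :=
  Filter.atTop.limsup fun n : ℕ => Real.log (complexity X n) / n

/-- Primitivity of a random substitution. -/
def IsPrimitive (θ : A → Finset (List A)) : Prop :=
  ∃ k : ℕ, 0 < k ∧ ∀ a b : A, ∃ w ∈ substPow θ k b, a ∈ w

/-- A random substitution has constant length `ℓ`. -/
def ConstantLength (θ : A → Finset (List A)) (ℓ : ℕ) : Prop :=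
  2 ≤ ℓ ∧ ∀ a : A, ∀ w ∈ θ a, w.length = ℓ

/-- Permissible letter frequency vectors. -/
def IsPLFV (θ : A → Finset (List A)) (ν : A → ℝ) : Prop :=
  (∀ a, ν a ∈ Set.Icc (0 : ℝ) 1) ∧
  ∃ b : A, [b] ∈ lang (substShift θ) ∧
    ∃ n : ℕ → ℕ, Tendsto n atTop atTop ∧
      ∃ v : ℕ → List A, (∀ k, v k ∈ substPow θ (n k) b) ∧
        ∀ a, Tendsto (fun k => ((v k).count a : ℝ) / (v k).length) atTop (𝓝 (ν a))

end RandSub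

open RandSub Filter Topology

/-- A two-letter alphabet. -/
inductive AB | a | b
  deriving DecidableEq, Repr

instance instFintypeAB : Fintype AB :=
  ⟨{AB.a, AB.b}, fun x => by cases x <;> simp⟩

/-- The random substitution θ(a) = {aa, ab}, θ(b) = {ba}. -/
def theta2 : AB → Finset (List AB)
  | .a => {[.a, .a], [.a, .b]}
  | .b => {[.b, .a]}


section Aux

variable {A : Type*} [DecidableEq A]

lemma mem_wordSubst_cons {θ : A → Finset (List A)} {a : A} {u w : List A} :
    w ∈ wordSubst θ (a :: u) ↔ ∃ v ∈ θ a, ∃ x ∈ wordSubst θ u, w = v ++ x := by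
  simp [wordSubst, eq_comm]

lemma wordSubst_singleton (θ : A → Finset (List A)) (a : A) : wordSubst θ [a] = θ a := by
  ext w; simp [mem_wordSubst_cons, wordSubst]

lemma wordSubst_append (θ : A → Finset (List A)) (u v : List A) :
    wordSubst θ (u ++ v) =
      (wordSubst θ u).biUnion fun p => (wordSubst θ v).image fun q => p ++ q := by
  induction u with
  | nil => ext w; simp [wordSubst]
  | cons a u ih =>
    ext w
    simp only [List.cons_append, mem_wordSubst_cons, ih, Finset.mem_biUnion,
      Finset.mem_image]
    constructor
    · rintro ⟨p, hp, x, ⟨y, hy, z, hz, rfl⟩, rfl⟩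
      exact ⟨p ++ y, ⟨p, hp, y, hy, rfl⟩, z, hz, by simp⟩
    · rintro ⟨s, ⟨p, hp, y, hy, rfl⟩, z, hz, rfl⟩
      exact ⟨p, hp, y ++ z, ⟨y, hy, z, hz, rfl⟩, by simp⟩

lemma wordSubst_biUnion (σ θ : A → Finset (List A)) (u : List A) :
    wordSubst (fun a => (σ a).biUnion (wordSubst θ)) u
      = (wordSubst σ u).biUnion (wordSubst θ) := by
  induction u with
  | nil => ext w; simp [wordSubst]
  | cons a u ih =>
    ext w
    constructor
    · intro hw
      rw [mem_wordSubst_cons] at hw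
      obtain ⟨p, hp, x, hx, rfl⟩ := hw
      obtain ⟨q, hq, hpq⟩ := Finset.mem_biUnion.1 hp
      rw [ih] at hx
      obtain ⟨y, hy, hxy⟩ := Finset.mem_biUnion.1 hx
      refine Finset.mem_biUnion.2 ⟨q ++ y, mem_wordSubst_cons.2 ⟨q, hq, y, hy, rfl⟩, ?_⟩
      rw [wordSubst_append]
      exact Finset.mem_biUnion.2 ⟨p, hpq, Finset.mem_image.2 ⟨x, hxy, rfl⟩⟩
    · intro hw
      obtain ⟨s, hs, hws⟩ := Finset.mem_biUnion.1 hw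
      rw [mem_wordSubst_cons] at hs
      obtain ⟨q, hq, y, hy, rfl⟩ := hs
      rw [wordSubst_append] at hws
      obtain ⟨p, hp, hw2⟩ := Finset.mem_biUnion.1 hws
      obtain ⟨x, hx, rfl⟩ := Finset.mem_image.1 hw2
      refine mem_wordSubst_cons.2 ⟨p, Finset.mem_biUnion.2 ⟨q, hq, hp⟩, x, ?_, rfl⟩
      rw [ih]
      exact Finset.mem_biUnion.2 ⟨y, hy, hx⟩

lemma wordSubst_of_singleton (v : List A) :
    wordSubst (fun a => ({[a]} : Finset (List A))) v = {v} := by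
  induction v with
  | nil => rfl
  | cons a u ih => ext w; simp [mem_wordSubst_cons, ih]

lemma wordSubst_substPow_zero (θ : A → Finset (List A)) (v : List A) :
    wordSubst (substPow θ 0) v = {v} := wordSubst_of_singleton v

lemma substPow_succ' (θ : A → Finset (List A)) (m : ℕ) (a : A) :
    substPow θ (m + 1) a = (θ a).biUnion (wordSubst (substPow θ m)) := by
  induction m with
  | zero =>
    have h : (θ a).biUnion (wordSubst (substPow θ 0)) = (θ a).biUnion (fun v => {v}) :=
      Finset.biUnion_congr rfl fun v _ => wordSubst_substPow_zero θ v
    rw [h]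
    show (substPow θ 0 a).biUnion (wordSubst θ) = _
    rw [show substPow θ 0 a = {[a]} from rfl, Finset.singleton_biUnion, wordSubst_singleton]
    simp
  | succ m ih =>
    have h : ∀ v, wordSubst (substPow θ (m + 1)) v
        = (wordSubst (substPow θ m) v).biUnion (wordSubst θ) := fun v =>
      wordSubst_biUnion (substPow θ m) θ v
    calc substPow θ (m + 2) a = (substPow θ (m + 1) a).biUnion (wordSubst θ) := rfl
      _ = ((θ a).biUnion (wordSubst (substPow θ m))).biUnion (wordSubst θ) := by rw [ih]
      _ = (θ a).biUnion fun v => (wordSubst (substPow θ m) v).biUnion (wordSubst θ) :=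
          Finset.biUnion_biUnion _ _ _
      _ = (θ a).biUnion (wordSubst (substPow θ (m + 1))) := by
          refine Finset.biUnion_congr rfl fun v _ => (h v).symm

lemma wordSubst_length {θ : A → Finset (List A)} {L : ℕ}
    (hθ : ∀ a, ∀ p ∈ θ a, p.length = L) :
    ∀ (v w : List A), w ∈ wordSubst θ v → w.length = L * v.length := by
  intro v
  induction v with
  | nil => intro w hw; simp [wordSubst] at hw; simp [hw]
  | cons a u ih =>
    intro w hw
    rw [mem_wordSubst_cons] at hw
    obtain ⟨p, hp, x, hx, rfl⟩ := hw
    simp only [List.length_append, hθ a p hp, ih x hx, List.length_cons]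
    ring

lemma card_appendSet {S T : Finset (List A)} {L : ℕ} (hS : ∀ v ∈ S, v.length = L) :
    (S.biUnion fun v => T.image fun w => v ++ w).card = S.card * T.card := by
  rw [Finset.card_biUnion]
  · calc ∑ u ∈ S, (T.image fun w => u ++ w).card
        = ∑ _u ∈ S, T.card := Finset.sum_congr rfl fun v _ =>
          Finset.card_image_of_injective T fun x y h => List.append_cancel_left h
      _ = S.card * T.card := by simp [mul_comm]
  · intro v₁ h₁ v₂ h₂ hne
    rw [Function.onFun, Finset.disjoint_left]
    rintro x hx₁ hx₂
    obtain ⟨w₁, _, rfl⟩ := Finset.mem_image.1 hx₁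
    obtain ⟨w₂, _, h⟩ := Finset.mem_image.1 hx₂
    have hl : v₂.length = v₁.length := (hS _ h₂).trans (hS _ h₁).symm
    exact hne ((List.append_inj h hl).1.symm)

end Aux

lemma theta2_len : ∀ c : AB, ∀ p ∈ theta2 c, p.length = 2 := by
  intro c p hp
  cases c <;> simp [theta2] at hp <;> first
    | (rcases hp with rfl | rfl <;> rfl)
    | (subst hp; rfl)

lemma substPow_length : ∀ (m : ℕ) (c : AB), ∀ w ∈ substPow theta2 m c, w.length = 2 ^ m := by
  intro m
  induction m with
  | zero => intro c w hw; simp [substPow] at hw; simp [hw]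
  | succ m ih =>
    intro c w hw
    obtain ⟨v, hv, hw⟩ := Finset.mem_biUnion.1 hw
    have := wordSubst_length theta2_len v w hw
    rw [this, ih c v hv, pow_succ, mul_comm]

lemma substPow_head : ∀ (m : ℕ) (c : AB), ∀ w ∈ substPow theta2 m c, w.head? = some c := by
  intro m
  induction m with
  | zero => intro c w hw; simp [substPow] at hw; simp [hw]
  | succ m ih =>
    intro c w hw
    obtain ⟨v, hv, hwv⟩ := Finset.mem_biUnion.1 hw
    have hvh := ih c v hv
    cases v with
    | nil => simp at hvh
    | cons d u =>
      simp only [List.head?_cons, Option.some.injEq] at hvh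
      subst hvh
      rw [mem_wordSubst_cons] at hwv
      obtain ⟨p, hp, x, hx, rfl⟩ := hwv
      cases d <;> simp [theta2] at hp <;> first
        | (rcases hp with rfl | rfl <;> rfl)
        | (subst hp; rfl)

lemma substPow_nonempty : ∀ (m : ℕ) (c : AB), (substPow theta2 m c).Nonempty := by
  have hne : ∀ c : AB, (theta2 c).Nonempty := by
    intro c; cases c <;> simp [theta2]
  have hws : ∀ v : List AB, (wordSubst theta2 v).Nonempty := by
    intro v
    induction v with
    | nil => exact ⟨[], by simp [wordSubst]⟩
    | cons a u ih =>
      obtain ⟨p, hp⟩ := hne a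
      obtain ⟨x, hx⟩ := ih
      exact ⟨p ++ x, mem_wordSubst_cons.2 ⟨p, hp, x, hx, rfl⟩⟩
  intro m c
  induction m with
  | zero => exact ⟨[c], by simp [substPow]⟩
  | succ m ih =>
    obtain ⟨v, hv⟩ := ih
    obtain ⟨w, hw⟩ := hws v
    exact ⟨w, Finset.mem_biUnion.2 ⟨v, hv, hw⟩⟩

lemma substPow_b_succ (m : ℕ) :
    substPow theta2 (m + 1) AB.b
      = (substPow theta2 m AB.b).biUnion fun v =>
          (substPow theta2 m AB.a).image fun w => v ++ w := by
  rw [substPow_succ']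
  show ({[AB.b, AB.a]} : Finset (List AB)).biUnion _ = _
  rw [Finset.singleton_biUnion]
  ext w
  simp [mem_wordSubst_cons, wordSubst_singleton, eq_comm]

lemma substPow_a_succ (m : ℕ) :
    substPow theta2 (m + 1) AB.a
      = ((substPow theta2 m AB.a).biUnion fun v =>
          (substPow theta2 m AB.a).image fun w => v ++ w)
        ∪ ((substPow theta2 m AB.a).biUnion fun v =>
          (substPow theta2 m AB.b).image fun w => v ++ w) := by
  rw [substPow_succ']
  show ({[AB.a, AB.a], [AB.a, AB.b]} : Finset (List AB)).biUnion _ = _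
  ext w
  simp only [Finset.mem_biUnion, Finset.mem_insert, Finset.mem_singleton, Finset.mem_union,
    Finset.mem_image, mem_wordSubst_cons, wordSubst_singleton]
  constructor
  · rintro ⟨u, (rfl | rfl), hu⟩ <;>
      [left; right] <;>
      · rw [mem_wordSubst_cons] at hu
        obtain ⟨v, hv, x, hx, rfl⟩ := hu
        rw [wordSubst_singleton] at hx
        exact ⟨v, hv, x, hx, rfl⟩
  · rintro (⟨v, hv, x, hx, rfl⟩ | ⟨v, hv, x, hx, rfl⟩) <;>
      [exact ⟨[AB.a, AB.a], Or.inl rfl,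
        mem_wordSubst_cons.2 ⟨v, hv, x, by rw [wordSubst_singleton]; exact ⟨hx, rfl⟩⟩⟩;
       exact ⟨[AB.a, AB.b], Or.inr rfl,
        mem_wordSubst_cons.2 ⟨v, hv, x, by rw [wordSubst_singleton]; exact ⟨hx, rfl⟩⟩⟩]

/-- Abbreviations for cardinalities. -/
noncomputable def cA (m : ℕ) : ℕ := (substPow theta2 m AB.a).card
noncomputable def cB (m : ℕ) : ℕ := (substPow theta2 m AB.b).card

lemma cB_succ (m : ℕ) : cB (m + 1) = cB m * cA m := by
  unfold cB cA
  rw [substPow_b_succ]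
  exact card_appendSet (substPow_length m AB.b)

lemma cA_succ (m : ℕ) : cA (m + 1) = cA m * cA m + cA m * cB m := by
  unfold cA cB
  rw [substPow_a_succ, Finset.card_union_of_disjoint, card_appendSet (substPow_length m AB.a),
    card_appendSet (substPow_length m AB.a)]
  rw [Finset.disjoint_left]
  rintro x hx₁ hx₂
  obtain ⟨v₁, hv₁, hx₁⟩ := Finset.mem_biUnion.1 hx₁
  obtain ⟨v₂, hv₂, hx₂⟩ := Finset.mem_biUnion.1 hx₂
  obtain ⟨w₁, hw₁, rfl⟩ := Finset.mem_image.1 hx₁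
  obtain ⟨w₂, hw₂, h⟩ := Finset.mem_image.1 hx₂
  have hl : v₂.length = v₁.length :=
    (substPow_length m AB.a v₂ hv₂).trans (substPow_length m AB.a v₁ hv₁).symm
  have := (List.append_inj h hl).2
  have h1 := substPow_head m AB.a w₁ hw₁
  have h2 := substPow_head m AB.b w₂ hw₂
  rw [this] at h2
  rw [h1] at h2
  simp at h2

lemma cB_pos (m : ℕ) : 0 < cB m := Finset.card_pos.2 (substPow_nonempty m AB.b)

lemma cA_eq (m : ℕ) : cA m = (m + 1) * cB m := by
  induction m with
  | zero =>
    have : cA 0 = 1 := by unfold cA; simp [substPow]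
    have h0 : cB 0 = 1 := by unfold cB; simp [substPow]
    rw [this, h0]
  | succ m ih =>
    rw [cA_succ, cB_succ, ih]
    ring

lemma cB_succ' (m : ℕ) : cB (m + 1) = (m + 1) * (cB m * cB m) := by
  rw [cB_succ, cA_eq]; ring

/-- (1/2^m)·log(#θ^m(b)) = Σ_{n=1}^m 2^{-n} log n for all m ≥ 1. -/
theorem theta2_log_card_b (m : ℕ) (hm : 1 ≤ m) :
    Real.log ((substPow theta2 m AB.b).card) / 2 ^ m =
      ∑ n ∈ Finset.Icc 1 m, Real.log n / 2 ^ n := by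
  induction m, hm using Nat.le_induction with
  | base =>
    have h0 : cB 0 = 1 := by unfold cB; simp [substPow]
    have h1 : cB 1 = 1 := by rw [cB_succ', h0]
    have : (substPow theta2 1 AB.b).card = cB 1 := rfl
    rw [this, h1]
    simp
  | succ m hm ih =>
    have hB : ∀ k, ((substPow theta2 k AB.b).card : ℝ) = (cB k : ℝ) := fun k => rfl
    have hpos : (0 : ℝ) < cB m := by exact_mod_cast cB_pos m
    have hcast : ((substPow theta2 (m + 1) AB.b).card : ℝ)
        = ((m : ℝ) + 1) * ((cB m : ℝ) * (cB m : ℝ)) := by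
      rw [hB, cB_succ']
      push_cast
      ring
    rw [hcast, Real.log_mul (by positivity) (by positivity),
      Real.log_mul (ne_of_gt hpos) (ne_of_gt hpos)]
    rw [Finset.sum_Icc_succ_top (by omega : 1 ≤ m + 1)]
    rw [← ih]
    have h2 : (2 : ℝ) ^ (m + 1) = 2 ^ m * 2 := by ring
    rw [hB] at *
    push_cast
    field_simp
    ring
end

section
/- Let θ be a primitive random substitution whose subshift has zero topological entropy. Then there exists a deterministic substitution φ (in fact a marginal of θ, mapping each letter to the longest realisation) which is primitive and satisfies X_φ = X_θ. -/
open Filter Topology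

open RandSub Filter Topology

/-!
If two realisations `u, v` of some `θ^k(a)` were prefix-incomparable, primitivity would let us
place a copy of `θ^k(a)` inside the image of every letter of a point of `X_θ`; choosing `u` or `v`
independently in `m` consecutive blocks then produces `2 ^ m` distinct legal words of length
`O(m)`, so the entropy would be positive. With zero entropy all realisations of each `θ^k(a)` are
therefore prefix-comparable, and by induction on `k` they are all prefixes of `φ^k(a)`, where `φ`
picks the longest realisation of each letter. Hence `θ` and `φ` have the same legal words, so the
same subshift, and `φ` inherits primitivity.
-/

theorem List.prefix_of_prefix_or_prefix_of_length_le {α : Type*} {u v : List α}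
    (h : u <+: v ∨ v <+: u) (hlen : u.length ≤ v.length) : u <+: v :=
  h.elim id fun h => (h.eq_of_length_le hlen).symm ▸ List.prefix_rfl

theorem List.not_prefix_or_prefix_append {α : Type*} {s t : List α}
    (h : ¬(s <+: t ∨ t <+: s)) (x y : List α) :
    ¬(s ++ x <+: t ++ y ∨ t ++ y <+: s ++ x) := by
  rintro (h' | h')
  · exact h (List.prefix_or_prefix_of_prefix ((s.prefix_append x).trans h') (t.prefix_append y))
  · exact h (List.prefix_or_prefix_of_prefix (s.prefix_append x) ((t.prefix_append y).trans h'))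

theorem List.not_prefix_or_prefix_flatten {α : Type*} {l l' : List (List α)}
    (h : List.Forall₂ (fun s t => s = t ∨ ¬(s <+: t ∨ t <+: s)) l l') (hne : l ≠ l') :
    ¬(l.flatten <+: l'.flatten ∨ l'.flatten <+: l.flatten) := by
  induction h with
  | nil => exact absurd rfl hne
  | cons hst _ ih =>
    simp only [List.flatten_cons]
    rcases hst with rfl | hst
    · rw [List.prefix_append_right_inj, List.prefix_append_right_inj]
      exact ih fun h => hne (h ▸ rfl)
    · exact List.not_prefix_or_prefix_append hst _ _

namespace RandSub

variable {A : Type*} [DecidableEq A] {θ : A → Finset (List A)}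

section WordSubst

theorem mem_wordSubst_cons {a : A} {u w : List A} :
    w ∈ wordSubst θ (a :: u) ↔ ∃ v ∈ θ a, ∃ w' ∈ wordSubst θ u, v ++ w' = w := by
  simp [wordSubst]

theorem mem_wordSubst {u w : List A} :
    w ∈ wordSubst θ u ↔
      ∃ l : List (List A), List.Forall₂ (fun a v => v ∈ θ a) u l ∧ w = l.flatten := by
  induction u generalizing w with
  | nil => simp [wordSubst]
  | cons a u ih =>
    simp only [mem_wordSubst_cons, ih, List.forall₂_cons_left_iff]
    constructor
    · rintro ⟨v, hv, _, ⟨l, hl, rfl⟩, rfl⟩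
      exact ⟨v :: l, ⟨v, l, hv, hl, rfl⟩, rfl⟩
    · rintro ⟨_, ⟨v, l, hv, hl, rfl⟩, rfl⟩
      exact ⟨v, hv, _, ⟨l, hl, rfl⟩, rfl⟩

theorem append_mem_wordSubst {u₁ u₂ w₁ w₂ : List A} (h₁ : w₁ ∈ wordSubst θ u₁)
    (h₂ : w₂ ∈ wordSubst θ u₂) : w₁ ++ w₂ ∈ wordSubst θ (u₁ ++ u₂) := by
  obtain ⟨l₁, hl₁, rfl⟩ := mem_wordSubst.1 h₁
  obtain ⟨l₂, hl₂, rfl⟩ := mem_wordSubst.1 h₂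
  exact mem_wordSubst.2 ⟨l₁ ++ l₂, List.rel_append hl₁ hl₂, List.flatten_append.symm⟩

theorem mem_wordSubst_singleton {a : A} {w : List A} (h : w ∈ θ a) : w ∈ wordSubst θ [a] :=
  mem_wordSubst_cons.2 ⟨w, h, [], Finset.mem_singleton_self _, w.append_nil⟩

theorem wordSubst_nonempty (hne : ∀ a, (θ a).Nonempty) (u : List A) :
    (wordSubst θ u).Nonempty := by
  induction u with
  | nil => exact ⟨[], Finset.mem_singleton_self _⟩
  | cons a u ih =>
    obtain ⟨v, hv⟩ := hne a
    obtain ⟨w, hw⟩ := ih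
    exact ⟨v ++ w, mem_wordSubst_cons.2 ⟨v, hv, w, hw, rfl⟩⟩

theorem substPow_nonempty (hne : ∀ a, (θ a).Nonempty) (k : ℕ) (a : A) :
    (substPow θ k a).Nonempty := by
  induction k with
  | zero => exact ⟨[a], Finset.mem_singleton_self _⟩
  | succ k ih =>
    obtain ⟨v, hv⟩ := ih
    obtain ⟨w, hw⟩ := wordSubst_nonempty hne v
    exact ⟨w, Finset.mem_biUnion.2 ⟨v, hv, hw⟩⟩

theorem length_le_length_of_mem_wordSubst (hwne : ∀ a, ∀ w ∈ θ a, w ≠ []) {u w : List A}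
    (hw : w ∈ wordSubst θ u) : u.length ≤ w.length := by
  induction u generalizing w with
  | nil => simp
  | cons a u ih =>
    obtain ⟨v, hv, w', hw', rfl⟩ := mem_wordSubst_cons.1 hw
    have := List.length_pos_iff.2 (hwne a v hv)
    simp only [List.length_cons, List.length_append]
    have := ih hw'
    omega

theorem ne_nil_of_mem_substPow (hwne : ∀ a, ∀ w ∈ θ a, w ≠ []) {k : ℕ} {a : A}
    {w : List A} (hw : w ∈ substPow θ k a) : w ≠ [] := by
  induction k generalizing w with
  | zero => simp_all [substPow]
  | succ k ih =>
    obtain ⟨v, hv, hw⟩ := Finset.mem_biUnion.1 hw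
    have := length_le_length_of_mem_wordSubst hwne hw
    have := List.length_pos_iff.2 (ih hv)
    exact List.length_pos_iff.1 (by omega)

theorem wordSubstPow_zero (u : List A) : wordSubstPow θ 0 u = {u} := by
  induction u with
  | nil => rfl
  | cons a u ih => simp_all [wordSubstPow, wordSubst, substPow]

theorem exists_mem_wordSubst_of_mem_wordSubstPow_succ {M : ℕ} {u w : List A}
    (hw : w ∈ wordSubstPow θ (M + 1) u) :
    ∃ v ∈ wordSubstPow θ M u, w ∈ wordSubst θ v := by
  induction u generalizing w with
  | nil => exact ⟨[], Finset.mem_singleton_self _, hw⟩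
  | cons b u ih =>
    obtain ⟨t, ht, w', hw', rfl⟩ := mem_wordSubst_cons.1 hw
    obtain ⟨v₁, hv₁, ht⟩ := Finset.mem_biUnion.1 ht
    obtain ⟨v₂, hv₂, hw'⟩ := ih hw'
    exact ⟨v₁ ++ v₂, mem_wordSubst_cons.2 ⟨v₁, hv₁, v₂, hv₂, rfl⟩,
      append_mem_wordSubst ht hw'⟩

theorem mem_substPow_add {K M : ℕ} {a : A} {w w' : List A} (hw : w ∈ substPow θ K a)
    (hw' : w' ∈ wordSubstPow θ M w) : w' ∈ substPow θ (K + M) a := by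
  induction M generalizing w' with
  | zero =>
    rw [wordSubstPow_zero, Finset.mem_singleton] at hw'
    rwa [hw']
  | succ M ih =>
    obtain ⟨v, hv, hw'⟩ := exists_mem_wordSubst_of_mem_wordSubstPow_succ hw'
    exact Finset.mem_biUnion.2 ⟨v, ih hv, hw'⟩

theorem exists_mem_wordSubst_infix (hne : ∀ a, (θ a).Nonempty) {u U w : List A}
    (hu : u <:+: U) (hw : w ∈ wordSubst θ u) : ∃ W ∈ wordSubst θ U, w <:+: W := by
  obtain ⟨p, s, rfl⟩ := hu
  obtain ⟨wp, hwp⟩ := wordSubst_nonempty hne p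
  obtain ⟨ws, hws⟩ := wordSubst_nonempty hne s
  exact ⟨wp ++ w ++ ws, append_mem_wordSubst (append_mem_wordSubst hwp hw) hws, wp, ws, rfl⟩

theorem IsLegal.of_infix {u v : List A} (hv : IsLegal θ v) (h : u <:+: v) : IsLegal θ u := by
  obtain ⟨a, k, w, hw, hvw⟩ := hv
  exact ⟨a, k, w, hw, h.trans hvw⟩

theorem IsLegal.of_mem_wordSubstPow (hne : ∀ a, (θ a).Nonempty) {M : ℕ} {u w : List A}
    (hu : IsLegal θ u) (hw : w ∈ wordSubstPow θ M u) : IsLegal θ w := by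
  obtain ⟨a, k, W, hW, huW⟩ := hu
  obtain ⟨W', hW', hwW'⟩ :=
    exists_mem_wordSubst_infix (fun b => substPow_nonempty hne M b) huW hw
  exact ⟨a, k + M, W', mem_substPow_add hW hW', hwW'⟩

theorem exists_append_append_mem_substPow (hne : ∀ a, (θ a).Nonempty) {K k : ℕ} {a b : A}
    {w : List A} (hw : w ∈ substPow θ K b) (ha : a ∈ w) :
    ∃ pre post : List A,
      ∀ s ∈ substPow θ k a, pre ++ s ++ post ∈ substPow θ (K + k) b := by
  obtain ⟨α, β, rfl⟩ := List.append_of_mem ha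
  obtain ⟨pre, hpre⟩ := wordSubst_nonempty (fun c => substPow_nonempty hne k c) α
  obtain ⟨post, hpost⟩ := wordSubst_nonempty (fun c => substPow_nonempty hne k c) β
  refine ⟨pre, post, fun s hs => mem_substPow_add hw ?_⟩
  rw [List.append_assoc]
  exact append_mem_wordSubst hpre (append_mem_wordSubst (mem_wordSubst_singleton hs) hpost)

end WordSubst

section Marginal

def PrefixComparable (θ : A → Finset (List A)) : Prop :=
  ∀ k a, ∀ u ∈ substPow θ k a, ∀ v ∈ substPow θ k a, u <+: v ∨ v <+: u

variable (φ : A → List A)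

theorem wordSubst_singleton (u : List A) :
    wordSubst (fun a => ({φ a} : Finset (List A))) u = {u.flatMap φ} := by
  induction u with
  | nil => rfl
  | cons a u ih => simp [wordSubst, ih]

theorem substPow_singleton (k : ℕ) (a : A) :
    substPow (fun a => ({φ a} : Finset (List A))) k a = {(·.flatMap φ)^[k] [a]} := by
  induction k with
  | zero => rfl
  | succ k ih =>
    rw [substPow, ih, Finset.singleton_biUnion, wordSubst_singleton,
      Function.iterate_succ_apply']

variable {φ}

theorem flatMap_mem_wordSubst (hφ : ∀ a, φ a ∈ θ a) (u : List A) :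
    u.flatMap φ ∈ wordSubst θ u := by
  induction u with
  | nil => exact Finset.mem_singleton_self _
  | cons a u ih => exact mem_wordSubst_cons.2 ⟨φ a, hφ a, _, ih, rfl⟩

theorem iterate_flatMap_mem_substPow (hφ : ∀ a, φ a ∈ θ a) (k : ℕ) (a : A) :
    (·.flatMap φ)^[k] [a] ∈ substPow θ k a := by
  induction k with
  | zero => exact Finset.mem_singleton_self _
  | succ k ih =>
    rw [Function.iterate_succ_apply']
    exact Finset.mem_biUnion.2 ⟨_, ih, flatMap_mem_wordSubst hφ _⟩

theorem length_le_length_flatMap (hmax : ∀ a, ∀ w ∈ θ a, w.length ≤ (φ a).length)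
    {u w : List A} (hw : w ∈ wordSubst θ u) : w.length ≤ (u.flatMap φ).length := by
  induction u generalizing w with
  | nil => simp_all [wordSubst]
  | cons a u ih =>
    obtain ⟨v, hv, w', hw', rfl⟩ := mem_wordSubst_cons.1 hw
    simp only [List.flatMap_cons, List.length_append]
    exact Nat.add_le_add (hmax a v hv) (ih hw')

theorem prefix_iterate_flatMap (hφ : ∀ a, φ a ∈ θ a)
    (hmax : ∀ a, ∀ w ∈ θ a, w.length ≤ (φ a).length) (hcomp : PrefixComparable θ) :
    ∀ k a, ∀ w ∈ substPow θ k a, w <+: (·.flatMap φ)^[k] [a] := by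
  intro k
  induction k with
  | zero => intro a w hw; rw [Finset.mem_singleton.1 hw]; rfl
  | succ k ih =>
    intro a w hw
    obtain ⟨v, hv, hw⟩ := Finset.mem_biUnion.1 hw
    obtain ⟨r, hr⟩ := ih a v hv
    have hφv : v.flatMap φ ∈ substPow θ (k + 1) a :=
      Finset.mem_biUnion.2 ⟨v, hv, flatMap_mem_wordSubst hφ v⟩
    have hwφv : w <+: v.flatMap φ :=
      List.prefix_of_prefix_or_prefix_of_length_le
        (hcomp (k + 1) a w (Finset.mem_biUnion.2 ⟨v, hv, hw⟩) _ hφv)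
        (length_le_length_flatMap hmax hw)
    rw [Function.iterate_succ_apply', ← hr, List.flatMap_append]
    exact hwφv.trans (List.prefix_append _ _)

variable (hφ : ∀ a, φ a ∈ θ a) (hmax : ∀ a, ∀ w ∈ θ a, w.length ≤ (φ a).length)
  (hcomp : PrefixComparable θ)
include hφ hmax hcomp

theorem isLegal_singleton_iff (u : List A) :
    IsLegal (fun a => ({φ a} : Finset (List A))) u ↔ IsLegal θ u := by
  simp only [IsLegal, substPow_singleton, Finset.mem_singleton, exists_eq_left]
  constructor
  · rintro ⟨a, k, hu⟩
    exact ⟨a, k, _, iterate_flatMap_mem_substPow hφ k a, hu⟩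
  · rintro ⟨a, k, w, hw, hu⟩
    exact ⟨a, k, hu.trans (prefix_iterate_flatMap hφ hmax hcomp k a w hw).isInfix⟩

theorem substShift_singleton_eq :
    substShift (fun a => ({φ a} : Finset (List A))) = substShift θ := by
  ext x
  exact forall₂_congr fun i n => isLegal_singleton_iff hφ hmax hcomp _

theorem IsPrimitive.singleton (hprim : IsPrimitive θ) :
    IsPrimitive (fun a => ({φ a} : Finset (List A))) := by
  obtain ⟨k, hk, h⟩ := hprim
  refine ⟨k, hk, fun a b =>
    ⟨_, (substPow_singleton φ k b).symm ▸ Finset.mem_singleton_self _, ?_⟩⟩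
  obtain ⟨w, hw, haw⟩ := h a b
  exact (prefix_iterate_flatMap hφ hmax hcomp k b w hw).subset haw

end Marginal

section Words

variable {B : Type*}

/-- `wordAt` elaborates with `List.range n` coerced into `List ℤ` through the list monad; the
lemmas below work with this normal form instead. -/
theorem wordAt_eq_map (x : ℤ → B) (i : ℤ) (n : ℕ) :
    wordAt x i n = (List.range n).map fun j : ℕ => x (i + j) := by
  simp [wordAt, ← List.map_eq_flatMap]

theorem length_wordAt (x : ℤ → B) (i : ℤ) (n : ℕ) : (wordAt x i n).length = n := by
  simp [wordAt_eq_map]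

@[simp]
theorem wordAt_zero (x : ℤ → B) (i : ℤ) : wordAt x i 0 = [] := rfl

theorem getElem_wordAt (x : ℤ → B) (i : ℤ) (n : ℕ) {j : ℕ}
    (hj : j < (wordAt x i n).length) :
    (wordAt x i n)[j] = x (i + j) := by
  simp [wordAt_eq_map]

theorem wordAt_add (x : ℤ → B) (i : ℤ) (p q : ℕ) :
    wordAt x i (p + q) = wordAt x i p ++ wordAt x (i + p) q := by
  simp [wordAt_eq_map, List.range_add, add_assoc]

theorem flatten_wordAt_add (g : ℤ → List B) (i : ℤ) (p q : ℕ) :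
    (wordAt g i (p + q)).flatten = (wordAt g i p).flatten ++ (wordAt g (i + p) q).flatten := by
  rw [wordAt_add, List.flatten_append]

theorem wordAt_prefix (x : ℤ → B) (i : ℤ) {n n' : ℕ} (h : n ≤ n') :
    wordAt x i n <+: wordAt x i n' := by
  obtain ⟨r, rfl⟩ := Nat.exists_eq_add_of_le h
  rw [wordAt_add]
  exact List.prefix_append _ _

theorem wordAt_infix (x : ℤ → B) {i i' : ℤ} {n n' : ℕ} (h₁ : i' ≤ i)
    (h₂ : i + n ≤ i' + n') : wordAt x i n <:+: wordAt x i' n' := by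
  obtain ⟨p, hp⟩ : ∃ p : ℕ, i = i' + p := ⟨(i - i').toNat, by omega⟩
  obtain ⟨r, hr⟩ : ∃ r : ℕ, n' = p + n + r := ⟨n' - p - n, by omega⟩
  rw [hr, wordAt_add, wordAt_add, ← hp]
  exact ⟨_, _, rfl⟩

theorem le_length_flatten_wordAt {g : ℤ → List B} (hg : ∀ i, g i ≠ []) (i : ℤ) (n : ℕ) :
    n ≤ (wordAt g i n).flatten.length := by
  rw [List.length_flatten]
  convert List.length_le_sum_of_one_le _ _ using 1
  · simp [length_wordAt]
  · simp only [wordAt_eq_map, List.map_map, List.mem_map, List.mem_range]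
    rintro _ ⟨j, -, rfl⟩
    exact List.length_pos_iff.2 (hg _)

/-- Inside the concatenation of the blocks `i', …, i' + n' - 1`, the concatenation of the
sub-window of blocks `i, …, i + n - 1` starts right after the blocks `i', …, i - 1`. -/
theorem getD_flatten_wordAt_of_le (g : ℤ → List B) {i i' : ℤ} {n n' : ℕ} (h₁ : i' ≤ i)
    (h₂ : i + n ≤ i' + n') {j : ℕ} (hj : j < (wordAt g i n).flatten.length) (d : B) :
    (wordAt g i' n').flatten.getD ((wordAt g i' (i - i').toNat).flatten.length + j) d =
      (wordAt g i n).flatten.getD j d := by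
  obtain ⟨r, hr⟩ : ∃ r : ℕ, n' = (i - i').toNat + n + r :=
    ⟨n' - (i - i').toNat - n, by omega⟩
  have hi : i' + ((i - i').toNat : ℕ) = i := by omega
  rw [hr, flatten_wordAt_add, flatten_wordAt_add, hi]
  rw [List.getD_append _ _ _ _ (by rw [List.length_append]; omega),
    List.getD_append_right _ _ _ _ (by omega), Nat.add_sub_cancel_left]

/-- A bi-infinite sequence of nonempty blocks concatenates to a bi-infinite sequence, with
block `0` starting at position `0`. -/
theorem exists_wordAt_eq_flatten {g : ℤ → List B} (hg : ∀ i, g i ≠ []) :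
    ∃ y : ℤ → B, ∀ p q : ℕ,
      wordAt y (-(wordAt g (-p) p).flatten.length) (wordAt g (-p) (p + q)).flatten.length =
        (wordAt g (-p) (p + q)).flatten := by
  obtain ⟨d, -⟩ := List.exists_mem_of_ne_nil _ (hg 0)
  set L : ℕ → ℕ := fun p => (wordAt g (-p) p).flatten.length with hL
  have hLN : ∀ {p N : ℕ}, p ≤ N →
      L N = (wordAt g (-N) ((-(p : ℤ)) - -N).toNat).flatten.length + L p := by
    intro p N hpN
    have hN : N = ((-(p : ℤ)) - -N).toNat + p := by omega
    simp only [hL]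
    conv_lhs => rw [hN, flatten_wordAt_add]
    rw [List.length_append, ← hN]
    congr 4
    omega
  have hLR : ∀ n : ℕ, n ≤ L n ∧ L n + n ≤ (wordAt g (-n) (2 * n)).flatten.length := by
    intro n
    simp only [hL]
    rw [two_mul, flatten_wordAt_add, List.length_append]
    have := le_length_flatten_wordAt hg (-n) n
    have := le_length_flatten_wordAt hg (-n + n) n
    omega
  -- `y s` is read off the window of blocks `-n, …, n - 1` with `n = |s| + 1`, in which block `0`
  -- starts at position `L n`.
  set y : ℤ → B := fun s => (wordAt g (-(s.natAbs + 1 : ℕ)) (2 * (s.natAbs + 1))).flatten.getD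
    (L (s.natAbs + 1) + s).toNat d
  refine ⟨y, fun p q => List.ext_getElem (by rw [length_wordAt]) fun t ht _ => ?_⟩
  rw [length_wordAt] at ht
  rw [getElem_wordAt, ← List.getD_eq_getElem _ d]
  set s : ℤ := -(L p : ℤ) + t
  set n := s.natAbs + 1
  set N := p + q + n
  obtain ⟨hLn, hRn⟩ := hLR n
  have h₁ := getD_flatten_wordAt_of_le g (i := -p) (i' := -N) (n := p + q) (n' := 2 * N)
    (by omega) (by omega) ht d
  have h₂ := getD_flatten_wordAt_of_le g (i := -n) (i' := -N) (n := 2 * n) (n' := 2 * N)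
    (j := (L n + s).toNat) (by omega) (by omega) (by omega) d
  have hp := hLN (p := p) (N := N) (by omega)
  have hn := hLN (p := n) (N := N) (by omega)
  rw [← h₁]
  refine h₂.symm.trans (congrArg (List.getD _ · d) ?_)
  omega

theorem length_flatten_wordAt_le {g : ℤ → List B} {C : ℕ}
    (hC : ∀ i, (g i).length ≤ C) (i : ℤ) (n : ℕ) :
    (wordAt g i n).flatten.length ≤ n * C := by
  rw [List.length_flatten]
  refine (List.sum_le_card_nsmul _ C ?_).trans_eq (by simp [length_wordAt])
  simp only [wordAt_eq_map, List.map_map, List.mem_map]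
  rintro _ ⟨j, -, rfl⟩
  exact hC _

theorem not_prefix_or_prefix_flatten_wordAt_cond (pre post : ℤ → List B)
    {u v : List B} (huv : ¬(u <+: v ∨ v <+: u)) {c c' : ℤ → Bool} {m j : ℕ} (hjm : j < m)
    (hj : c j ≠ c' j) :
    ¬((wordAt (fun i => pre i ++ cond (c i) u v ++ post i) 0 m).flatten <+:
        (wordAt (fun i => pre i ++ cond (c' i) u v ++ post i) 0 m).flatten ∨
      (wordAt (fun i => pre i ++ cond (c' i) u v ++ post i) 0 m).flatten <+:
        (wordAt (fun i => pre i ++ cond (c i) u v ++ post i) 0 m).flatten) := by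
  have hblock : ∀ i, c i ≠ c' i → ¬(pre i ++ cond (c i) u v ++ post i <+:
      pre i ++ cond (c' i) u v ++ post i ∨
      pre i ++ cond (c' i) u v ++ post i <+: pre i ++ cond (c i) u v ++ post i) := by
    intro i
    simp only [List.append_assoc, List.prefix_append_right_inj]
    cases c i <;> cases c' i <;> intro h
    · exact absurd rfl h
    · exact List.not_prefix_or_prefix_append (huv ∘ Or.symm) _ _
    · exact List.not_prefix_or_prefix_append huv _ _
    · exact absurd rfl h
  refine List.not_prefix_or_prefix_flatten ?_ fun hl => ?_
  · simp only [wordAt_eq_map, List.forall₂_map_left_iff, List.forall₂_map_right_iff,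
      List.forall₂_same]
    intro i _
    by_cases h : c (0 + i) = c' (0 + i)
    · exact .inl (by rw [h])
    · exact .inr (hblock _ h)
  · have := congrArg (·[j]?) hl
    simp only [wordAt_eq_map, List.getElem?_map, List.getElem?_range hjm, Option.map_some,
      Option.some_inj, zero_add] at this
    exact hblock j hj (.inl (this ▸ List.prefix_rfl))

end Words

section Complexity

variable {B : Type*}

theorem card_le_complexity {ι : Type*} [Finite B] [Fintype ι] {X : Set (ℤ → B)} {n : ℕ}
    {w : ι → List B} (hw : w.Injective) (hlang : ∀ i, w i ∈ lang X)
    (hlen : ∀ i, (w i).length = n) : Fintype.card ι ≤ complexity X n := by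
  have : Finite {u : List B | u.length = n ∧ u ∈ lang X} :=
    ((List.finite_length_eq B n).subset fun _ hu => hu.1).to_subtype
  rw [← Nat.card_eq_fintype_card]
  exact Nat.card_le_card_of_injective (fun i => ⟨w i, hlen i, hlang i⟩)
    fun i j h => hw (congrArg Subtype.val h)

theorem complexity_le_card_pow [Fintype B] (X : Set (ℤ → B)) (n : ℕ) :
    complexity X n ≤ Fintype.card B ^ n := by
  calc complexity X n ≤ Nat.card {u : List B | u.length = n} :=
        Nat.card_mono (List.finite_length_eq B n) fun _ hu => hu.1
    _ = Fintype.card B ^ n :=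
        (Nat.card_eq_fintype_card (α := List.Vector B n)).trans (card_vector n)

theorem topEntropy_pos_of_two_pow_le_complexity [Fintype B] {X : Set (ℤ → B)}
    {C : ℕ} (hC : 0 < C) (h : ∀ m, 2 ^ m ≤ complexity X (C * m)) : 0 < topEntropy X := by
  have hbdd : IsBoundedUnder (· ≤ ·) atTop fun n : ℕ => Real.log (complexity X n) / n := by
    refine isBoundedUnder_of ⟨Real.log (Fintype.card B), fun n => ?_⟩
    have hB := Real.log_natCast_nonneg (Fintype.card B)
    rcases Nat.eq_zero_or_pos n with rfl | hn
    · simpa using hB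
    rw [div_le_iff₀ (by exact_mod_cast hn), mul_comm, ← Real.log_pow]
    rcases Nat.eq_zero_or_pos (complexity X n) with hc | hc
    · rw [hc, Nat.cast_zero, Real.log_zero, Real.log_pow]
      positivity
    · exact Real.log_le_log (by exact_mod_cast hc) (by exact_mod_cast complexity_le_card_pow X n)
  have hfreq : ∃ᶠ n in atTop, Real.log 2 / C ≤ Real.log (complexity X n) / n := by
    refine frequently_atTop.2 fun N => ⟨C * (N + 1), by nlinarith, ?_⟩
    have hm : ((N + 1 : ℕ) : ℝ) * Real.log 2 ≤ Real.log (complexity X (C * (N + 1))) := by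
      rw [← Real.log_pow]
      exact Real.log_le_log (by positivity) (by exact_mod_cast h (N + 1))
    rw [div_le_div_iff₀ (by exact_mod_cast hC) (by positivity), Nat.cast_mul]
    nlinarith [Real.log_pos one_lt_two]
  exact (div_pos (Real.log_pos one_lt_two) (by exact_mod_cast hC)).trans_le
    (le_limsup_of_frequently_le hfreq hbdd)

theorem two_pow_le_complexity [Finite B] {X : Set (ℤ → B)} {m n : ℕ}
    (W : (ℤ → Bool) → List B)
    (hW : ∀ c c', (∃ j : ℕ, j < m ∧ c j ≠ c' j) → ¬(W c <+: W c' ∨ W c' <+: W c))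
    (hX : ∀ c, ∃ y ∈ X, W c <+: wordAt y 0 n) : 2 ^ m ≤ complexity X n := by
  choose y hyX hy using hX
  set ext : (Fin m → Bool) → ℤ → Bool :=
    fun f => Function.extend (fun j : Fin m => (j : ℤ)) f fun _ => false
  have hinj : Function.Injective fun f => wordAt (y (ext f)) 0 n := by
    intro f f' heq
    by_contra hff
    obtain ⟨j, hj⟩ := Function.ne_iff.1 hff
    have hext : ∀ f, ext f j = f j := fun f =>
      (Nat.cast_injective.comp Fin.val_injective).extend_apply f _ j
    have heq : wordAt (y (ext f)) 0 n = wordAt (y (ext f')) 0 n := heq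
    exact hW (ext f) (ext f') ⟨j, j.isLt, by rwa [hext, hext]⟩
      (List.prefix_or_prefix_of_prefix (hy _) (heq ▸ hy _))
  simpa using card_le_complexity hinj (fun f => ⟨_, hyX _, 0, by rw [length_wordAt]⟩)
    fun f => length_wordAt _ _ _

end Complexity

theorem flatten_wordAt_mem_wordSubstPow {M : ℕ} {x : ℤ → A} {g : ℤ → List A}
    (hg : ∀ i, g i ∈ substPow θ M (x i)) (i : ℤ) (n : ℕ) :
    (wordAt g i n).flatten ∈ wordSubstPow θ M (wordAt x i n) := by
  refine mem_wordSubst.2 ⟨_, ?_, rfl⟩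
  simp only [wordAt_eq_map, List.forall₂_map_left_iff, List.forall₂_map_right_iff,
    List.forall₂_same]
  exact fun j _ => hg _

theorem exists_mem_substShift_wordAt_eq_flatten (hne : ∀ a, (θ a).Nonempty)
    (hwne : ∀ a, ∀ w ∈ θ a, w ≠ []) {M : ℕ} {x : ℤ → A} (hx : x ∈ substShift θ)
    {g : ℤ → List A} (hg : ∀ i, g i ∈ substPow θ M (x i)) :
    ∃ y ∈ substShift θ, ∀ m : ℕ,
      wordAt y 0 (wordAt g 0 m).flatten.length = (wordAt g 0 m).flatten := by
  obtain ⟨y, hy⟩ := exists_wordAt_eq_flatten fun i => ne_nil_of_mem_substPow hwne (hg i)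
  refine ⟨y, fun i n => ?_, fun m => by simpa using hy 0 m⟩
  set p := i.natAbs
  have hlegal : IsLegal θ (wordAt g (-p) (p + (p + n))).flatten :=
    (hx _ _).of_mem_wordSubstPow hne (flatten_wordAt_mem_wordSubstPow hg _ _)
  rw [← hy] at hlegal
  refine hlegal.of_infix (wordAt_infix y ?_ ?_)
  · have := le_length_flatten_wordAt (fun i => ne_nil_of_mem_substPow hwne (hg i)) (-p) p
    omega
  · rw [flatten_wordAt_add, List.length_append]
    have := le_length_flatten_wordAt (fun i => ne_nil_of_mem_substPow hwne (hg i)) (-p + p) (p + n)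
    omega

/-- Choosing freely between two prefix-incomparable realisations of `θ^k(a)` in each of the
first `m` blocks of a substituted point gives `2 ^ m` legal words of length `C * m`. -/
theorem exists_two_pow_le_complexity [Finite A] (hne : ∀ a, (θ a).Nonempty)
    (hwne : ∀ a, ∀ w ∈ θ a, w ≠ []) (hprim : IsPrimitive θ)
    (hX : (substShift θ).Nonempty)
    {k : ℕ} {a : A} {u v : List A} (hu : u ∈ substPow θ k a) (hv : v ∈ substPow θ k a)
    (huv : ¬(u <+: v ∨ v <+: u)) :
    ∃ C : ℕ, 0 < C ∧ ∀ m : ℕ, 2 ^ m ≤ complexity (substShift θ) (C * m) := by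
  obtain ⟨x, hx⟩ := hX
  obtain ⟨K, -, hK⟩ := hprim
  choose pre post hpp using fun b =>
    let ⟨_, hw, ha⟩ := hK a b
    exists_append_append_mem_substPow (k := k) hne hw ha
  set block : (ℤ → Bool) → ℤ → List A :=
    fun c i => pre (x i) ++ cond (c i) u v ++ post (x i)
  have hblock : ∀ c i, block c i ∈ substPow θ (K + k) (x i) :=
    fun c i => hpp _ _ (by cases c i <;> assumption)
  obtain ⟨C, hC⟩ : ∃ C, ∀ c i, (block c i).length ≤ C := by
    have : Nonempty A := ⟨x 0⟩
    obtain ⟨b, hb⟩ := Finite.exists_max fun b => (pre b).length + (post b).length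
    refine ⟨(pre b).length + (post b).length + u.length + v.length, fun c i => ?_⟩
    have := hb (x i)
    simp only [block, List.length_append]
    cases c i <;> simp <;> omega
  refine ⟨C + 1, C.succ_pos, fun m =>
    two_pow_le_complexity (fun c => (wordAt (block c) 0 m).flatten)
      (fun c c' ⟨j, hjm, hj⟩ => not_prefix_or_prefix_flatten_wordAt_cond _ _ huv hjm hj)
      fun c => ?_⟩
  obtain ⟨y, hyX, hy⟩ := exists_mem_substShift_wordAt_eq_flatten hne hwne hx (hblock c)
  refine ⟨y, hyX, ?_⟩
  rw [← hy m]
  exact wordAt_prefix _ _ ((length_flatten_wordAt_le (hC c) 0 m).trans (by nlinarith))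

theorem prefixComparable_of_topEntropy_eq_zero [Fintype A] (hne : ∀ a, (θ a).Nonempty)
    (hwne : ∀ a, ∀ w ∈ θ a, w ≠ []) (hprim : IsPrimitive θ)
    (hX : (substShift θ).Nonempty)
    (h0 : topEntropy (substShift θ) = 0) : PrefixComparable θ := by
  intro k a u hu v hv
  by_contra huv
  obtain ⟨C, hC, hcompl⟩ := exists_two_pow_le_complexity hne hwne hprim hX hu hv huv
  exact (topEntropy_pos_of_two_pow_le_complexity hC hcompl).ne' h0

end RandSub

/-- if θ is a primitive random substitution whose subshift has zero
topological entropy, then the marginal φ of θ sending each letter to its longest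
realisation is a primitive deterministic substitution with the same subshift. -/
theorem zero_entropy_deterministic {A : Type*} [Fintype A] [DecidableEq A]
    (θ : A → Finset (List A)) (hne : ∀ a, (θ a).Nonempty)
    (hwne : ∀ a, ∀ w ∈ θ a, w ≠ []) (hprim : IsPrimitive θ)
    (hX : (substShift θ).Nonempty)
    (h0 : topEntropy (substShift θ) = 0) :
    ∃ φ : A → List A, (∀ a, φ a ∈ θ a) ∧
      (∀ a, ∀ u ∈ θ a, u.length ≤ (φ a).length) ∧
      IsPrimitive (fun a => ({φ a} : Finset (List A))) ∧
      substShift (fun a => ({φ a} : Finset (List A))) = substShift θ := by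
  choose φ hφ hmax using fun a => Finset.exists_max_image (θ a) List.length (hne a)
  have hcomp := prefixComparable_of_topEntropy_eq_zero hne hwne hprim hX h0
  exact ⟨φ, hφ, hmax, hprim.singleton hφ hmax hcomp, substShift_singleton_eq hφ hmax hcomp⟩
end

section
/- The set {1 + log_ℓ k : ℓ ∈ ℕ, ℓ ≥ 3, k ∈ ℕ, 1 ≤ k ≤ ℓ!} is dense in the interval [1, ∞). -/
/-- For `ℓ ≥ 4c`, we have `ℓ^c ≤ ℓ!`. -/
lemma pow_le_factorial_of_le (c ℓ : ℕ) (h : 4 * c ≤ ℓ) (hℓ : 1 ≤ ℓ) :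
    ℓ ^ c ≤ ℓ.factorial := by
  rcases Nat.eq_zero_or_pos c with rfl | hc
  · simpa using Nat.one_le_iff_ne_zero.mpr (Nat.factorial_ne_zero ℓ)
  have h2c : 2 * c ≤ ℓ := by omega
  have ht : ℓ ≤ (ℓ + 1 - 2 * c) ^ 2 := by
    have h3 : 3 ≤ ℓ + 1 - 2 * c := by omega
    calc ℓ ≤ 2 * (ℓ + 1 - 2 * c) := by omega
    _ ≤ (ℓ + 1 - 2 * c) * (ℓ + 1 - 2 * c) := by
        exact Nat.mul_le_mul_right _ (by omega)
    _ = (ℓ + 1 - 2 * c) ^ 2 := (sq _).symm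
  calc ℓ ^ c ≤ ((ℓ + 1 - 2 * c) ^ 2) ^ c := Nat.pow_le_pow_left ht c
    _ = (ℓ + 1 - 2 * c) ^ (2 * c) := by rw [← pow_mul]
    _ ≤ ℓ.descFactorial (2 * c) := Nat.pow_sub_le_descFactorial ℓ (2 * c)
    _ ≤ (ℓ - 2 * c).factorial * ℓ.descFactorial (2 * c) :=
        Nat.le_mul_of_pos_left _ (Nat.factorial_pos _)
    _ = ℓ.factorial := Nat.factorial_mul_descFactorial h2c

/-- the set {1 + log_ℓ k : ℓ ≥ 3, 1 ≤ k ≤ ℓ!} is dense in [1,∞). -/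
theorem log_exponent_set_dense :
    Set.Ici (1 : ℝ) ⊆ closure {x : ℝ | ∃ ℓ k : ℕ, 3 ≤ ℓ ∧ 1 ≤ k ∧ k ≤ ℓ.factorial ∧
      x = 1 + Real.log k / Real.log ℓ} := by
  intro x hx
  rw [Set.mem_Ici] at hx
  set α : ℝ := x - 1 with hα
  have hα0 : 0 ≤ α := by linarith
  rw [Metric.mem_closure_iff]
  intro ε hε
  -- choose m with α + 1 ≤ m
  set m : ℕ := ⌈α⌉₊ + 1 with hm
  have hαm : α + 1 ≤ (m : ℝ) := by
    have := Nat.le_ceil α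
    push_cast [hm]
    linarith
  -- choose ℓ large
  set ℓ : ℕ := max (max 3 (4 * m)) (⌈Real.exp (Real.log 2 / ε)⌉₊ + 1) with hℓdef
  have hℓ3 : 3 ≤ ℓ := le_trans (le_max_left 3 (4 * m)) (le_max_left _ _)
  have hℓ4m : 4 * m ≤ ℓ := le_trans (le_max_right 3 (4 * m)) (le_max_left _ _)
  have hℓ1R : (1 : ℝ) ≤ (ℓ : ℝ) := by exact_mod_cast le_trans (by norm_num) hℓ3
  have hℓ1R' : (1 : ℝ) < (ℓ : ℝ) := by exact_mod_cast lt_of_lt_of_le (by norm_num) hℓ3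
  have hlogℓ : 0 < Real.log ℓ := Real.log_pos hℓ1R'
  have hℓexp : Real.exp (Real.log 2 / ε) < (ℓ : ℝ) := by
    have h1 : (⌈Real.exp (Real.log 2 / ε)⌉₊ + 1 : ℕ) ≤ ℓ := le_max_right _ _
    have h2 : Real.exp (Real.log 2 / ε) ≤ (⌈Real.exp (Real.log 2 / ε)⌉₊ : ℝ) :=
      Nat.le_ceil _
    have h3 : ((⌈Real.exp (Real.log 2 / ε)⌉₊ + 1 : ℕ) : ℝ) ≤ (ℓ : ℝ) := by
      exact_mod_cast h1
    push_cast at h3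
    linarith
  have hlog2ε : Real.log 2 / Real.log ℓ < ε := by
    have h1 : Real.log 2 / ε < Real.log ℓ := by
      calc Real.log 2 / ε = Real.log (Real.exp (Real.log 2 / ε)) :=
            (Real.log_exp _).symm
        _ < Real.log ℓ := Real.log_lt_log (Real.exp_pos _) hℓexp
    rw [div_lt_iff₀ hlogℓ]
    have h2 := (div_lt_iff₀ hε).mp h1
    linarith
  -- define k
  set k : ℕ := ⌈(ℓ : ℝ) ^ α⌉₊ with hk
  have hrpow1 : (1 : ℝ) ≤ (ℓ : ℝ) ^ α := Real.one_le_rpow hℓ1R hα0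
  have hrpow0 : (0 : ℝ) < (ℓ : ℝ) ^ α := lt_of_lt_of_le one_pos hrpow1
  have hk1 : 1 ≤ k := by
    rw [hk, Nat.one_le_ceil_iff]
    exact hrpow0
  have hkge : (ℓ : ℝ) ^ α ≤ (k : ℝ) := Nat.le_ceil _
  have hkle : (k : ℝ) ≤ 2 * (ℓ : ℝ) ^ α := by
    have := Nat.ceil_lt_add_one (le_of_lt hrpow0)
    have h2 : (ℓ : ℝ) ^ α + 1 ≤ 2 * (ℓ : ℝ) ^ α := by linarith
    rw [hk]
    linarith
  -- k ≤ ℓ!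
  have hkfact : k ≤ ℓ.factorial := by
    have h1 : (k : ℝ) ≤ (ℓ : ℝ) ^ (m : ℝ) := by
      calc (k : ℝ) ≤ 2 * (ℓ : ℝ) ^ α := hkle
        _ ≤ (ℓ : ℝ) * (ℓ : ℝ) ^ α := by
            apply mul_le_mul_of_nonneg_right _ (le_of_lt hrpow0)
            exact_mod_cast le_trans (by norm_num) hℓ3
        _ = (ℓ : ℝ) ^ (α + 1) := by
            rw [Real.rpow_add (lt_of_lt_of_le one_pos hℓ1R), Real.rpow_one, mul_comm]
        _ ≤ (ℓ : ℝ) ^ (m : ℝ) := Real.rpow_le_rpow_of_exponent_le hℓ1R hαm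
    have h2 : ((ℓ ^ m : ℕ) : ℝ) = (ℓ : ℝ) ^ (m : ℝ) := by
      rw [Nat.cast_pow, Real.rpow_natCast]
    have h3 : k ≤ ℓ ^ m := by
      have : (k : ℝ) ≤ ((ℓ ^ m : ℕ) : ℝ) := by rw [h2]; exact h1
      exact_mod_cast this
    exact le_trans h3 (pow_le_factorial_of_le m ℓ hℓ4m (by omega))
  -- the approximating point
  refine ⟨1 + Real.log k / Real.log ℓ, ⟨ℓ, k, hℓ3, hk1, hkfact, rfl⟩, ?_⟩
  have hlogk_ge : α * Real.log ℓ ≤ Real.log k := by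
    calc α * Real.log ℓ = Real.log ((ℓ : ℝ) ^ α) :=
          (Real.log_rpow (lt_of_lt_of_le one_pos hℓ1R) α).symm
      _ ≤ Real.log k := Real.log_le_log hrpow0 hkge
  have hlogk_le : Real.log k ≤ Real.log 2 + α * Real.log ℓ := by
    calc Real.log k ≤ Real.log (2 * (ℓ : ℝ) ^ α) := by
          apply Real.log_le_log _ hkle
          exact_mod_cast Nat.lt_of_lt_of_le Nat.zero_lt_one hk1
      _ = Real.log 2 + α * Real.log ℓ := by
          rw [Real.log_mul (by norm_num) (ne_of_gt hrpow0),
            Real.log_rpow (lt_of_lt_of_le one_pos hℓ1R)]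
  have h1 : α ≤ Real.log k / Real.log ℓ := by
    rw [le_div_iff₀ hlogℓ]
    exact hlogk_ge
  have h2 : Real.log k / Real.log ℓ ≤ α + Real.log 2 / Real.log ℓ := by
    rw [div_le_iff₀ hlogℓ, add_mul, div_mul_cancel₀ _ (ne_of_gt hlogℓ)]
    linarith [hlogk_le]
  rw [Real.dist_eq]
  have : x - (1 + Real.log k / Real.log ℓ) = α - Real.log k / Real.log ℓ := by
    rw [hα]; ring
  rw [this, abs_sub_lt_iff]
  constructor
  · linarith
  · linarith
end
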